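/- Suppose for every real x > 396738 there is a prime in the interval (x, x + x/(25 ln² x)). Then for all n with p_n > 396738, (ln p_{n+1})³ - (ln p_n)³ < 3/25. -/

import Mathlib

/-!
The function `y ↦ (log y)³` is concave on `[e², ∞)`, so its increment from `p_n` to `p_{n+1}` is
at most `3 (log p_n)² (p_{n+1} - p_n) / p_n`, and the short-interval hypothesis bounds the relative
gap `(p_{n+1} - p_n) / p_n` by `1 / (25 (log p_n)²)`.
-/

open Real

/-- `prime n` is the n-th prime, with `prime 1 = 2`. -/
noncomputable def prime (n : ℕ) : ℕ := Nat.nth Nat.Prime (n - 1)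

theorem exp_two_lt_nine : exp 2 < 9 := by
  have h : exp 1 < 3 := exp_one_lt_d9.trans (by norm_num)
  calc exp 2 = exp 1 ^ 2 := by rw [← exp_nat_mul]; norm_num
    _ < 3 ^ 2 := pow_lt_pow_left₀ h (exp_pos 1).le (by norm_num)
    _ = 9 := by norm_num

/- Writing `y = x * exp d`, this reduces to `(L + d) ^ 3 - L ^ 3 ≤ 3 L² (d + d² / 2 + d³ / 6)`
for `L = log x ≥ 2` and `d ≥ 0`. -/
theorem log_pow_three_sub_le {x y : ℝ} (hx : exp 2 ≤ x) (hxy : x ≤ y) :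
    log y ^ 3 - log x ^ 3 ≤ 3 * log x ^ 2 * ((y - x) / x) := by
  have hx0 : 0 < x := (exp_pos 2).trans_le hx
  have hL : 2 ≤ log x := (le_log_iff_exp_le hx0).2 hx
  set L := log x
  set d := log y - L with hd_def
  have hd : 0 ≤ d := sub_nonneg.2 (log_le_log hx0 hxy)
  have hratio : (y - x) / x = exp d - 1 := by
    rw [hd_def, exp_sub, exp_log (hx0.trans_le hxy), exp_log hx0]
    field_simp
  have htaylor : d + d ^ 2 / 2 + d ^ 3 / 6 ≤ exp d - 1 := by
    have := sum_le_exp_of_nonneg hd 4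
    simp only [Finset.sum_range_succ, Finset.sum_range_zero, Nat.factorial] at this
    norm_num at this
    linarith
  have hlogy : log y = L + d := by ring
  rw [hratio, hlogy]
  calc (L + d) ^ 3 - L ^ 3 = 3 * L ^ 2 * d + 3 * L * d ^ 2 + d ^ 3 := by ring
    _ ≤ 3 * L ^ 2 * (d + d ^ 2 / 2 + d ^ 3 / 6) := by
        nlinarith [mul_nonneg (mul_nonneg (pow_nonneg hd 2) (by linarith : (0:ℝ) ≤ L))
            (sub_nonneg.2 hL), mul_nonneg (pow_nonneg hd 3) (by nlinarith : (0:ℝ) ≤ L ^ 2 - 2)]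
    _ ≤ 3 * L ^ 2 * (exp d - 1) := by gcongr

theorem prime_le_prime_succ (n : ℕ) : prime n ≤ prime (n + 1) :=
  Nat.nth_monotone Nat.infinite_setOfPred_prime (by omega)

theorem prime_succ_le_of_lt {n q : ℕ} (hq : q.Prime) (hnq : prime n < q) : prime (n + 1) ≤ q := by
  have hcount := Nat.nth_count hq
  rw [prime, ← hcount, Nat.nth_lt_nth Nat.infinite_setOfPred_prime] at hnq
  rw [prime, ← hcount, Nat.add_sub_cancel, Nat.nth_le_nth Nat.infinite_setOfPred_prime]
  omega

theorem log_pow_three_sub_lt {x y c : ℝ} (hc : 0 < c) (hx : exp 2 ≤ x) (hxy : x ≤ y)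
    (hy : y < x + x / (c * log x ^ 2)) : log y ^ 3 - log x ^ 3 < 3 / c := by
  have hx0 : 0 < x := (exp_pos 2).trans_le hx
  have hL : log x ≠ 0 := by linarith [(le_log_iff_exp_le hx0).2 hx]
  have hgap : (y - x) / x < 1 / (c * log x ^ 2) := by
    rw [div_lt_iff₀ hx0, one_div_mul_eq_div]
    linarith
  calc log y ^ 3 - log x ^ 3 ≤ 3 * log x ^ 2 * ((y - x) / x) := log_pow_three_sub_le hx hxy
    _ < 3 * log x ^ 2 * (1 / (c * log x ^ 2)) := by gcongr
    _ = 3 / c := by field_simp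

theorem log_pow_three_bound
    (h : ∀ x : ℝ, 396738 < x →
      ∃ q : ℕ, q.Prime ∧ x < q ∧ (q : ℝ) < x + x / (25 * Real.log x ^ 2)) :
    ∀ n : ℕ, 396738 < (prime n : ℝ) →
      Real.log (prime (n+1)) ^ 3 - Real.log (prime n) ^ 3 < 3/25 := by
  intro n hn
  obtain ⟨q, hq, hnq, hq_lt⟩ := h (prime n) hn
  have hsucc_le : (prime (n + 1) : ℝ) ≤ q := by
    exact_mod_cast prime_succ_le_of_lt hq (by exact_mod_cast hnq)
  exact log_pow_three_sub_lt (by norm_num) (by linarith [exp_two_lt_nine])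
    (by exact_mod_cast prime_le_prime_succ n) (hsucc_le.trans_lt hq_lt)
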